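/- arXiv:1906.03991 — 3 statements merged into one kernel-verified Lean document; each statement's English description precedes it below -/
import Mathlib

section
/- Suppose a < b are elements of [n] and the word ba can be read from P to Q, where P, Q are subsets of [n] with |P| = |Q|. Then there exists a subset S with P ≤ S ≤ Q and both a, b ∈ S. In particular, the word ab can also be read from P to Q. -/
/-- The `i`-th smallest element (0-indexed) of a finite set of naturals
(`0` if `i` is out of range). -/
def nthEl (S : Finset ℕ) (i : ℕ) : ℕ := (S.sort (· ≤ ·)).getD i 0

/-- The order on subsets of equal cardinality: `S ≤ T` iff `|S| = |T|` and the `i`-th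
smallest element of `S` is at most that of `T`, for all `i`. -/
def FLE (S T : Finset ℕ) : Prop :=
  S.card = T.card ∧ ∀ i < T.card, nthEl S i ≤ nthEl T i

/-- The general order: `S ≤ T` iff `|S| ≥ |T|` and the `i`-th smallest element of `S`
is at most that of `T` for all `i < |T|`. -/
def GLE (S T : Finset ℕ) : Prop :=
  T.card ≤ S.card ∧ ∀ i < T.card, nthEl S i ≤ nthEl T i

/-- A word `w` over `{1,…,n}` is readable from `P` to `Q` if there is a chain
`P ≤ S₁ ≤ … ≤ S_{|w|} ≤ Q` of subsets of `{1,…,n}` with `wᵢ ∈ Sᵢ` for each `i`. -/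
def Readable (n : ℕ) (w : List ℕ) (P Q : Finset ℕ) : Prop :=
  ∃ L : List (Finset ℕ), L.length = w.length ∧ (∀ A ∈ L, A ⊆ Finset.Icc 1 n) ∧
    List.Chain' FLE (P :: (L ++ [Q])) ∧
    ∀ i (h : i < w.length), w.get ⟨i, h⟩ ∈ L.getD i ∅

/-- Tropical (max-plus) product of matrices indexed by subsets of `{1,…,n}`. -/
noncomputable def tmul (n : ℕ) (A B : Finset ℕ → Finset ℕ → WithBot ℝ) :
    Finset ℕ → Finset ℕ → WithBot ℝ :=
  fun P Q => ((Finset.Icc 1 n).powerset).sup fun R => A P R + B R Q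

open Classical in
/-- The image of a generator `x ∈ {1,…,n}` under `ρₙ`. -/
noncomputable def rhoGen (n : ℕ) (x : ℕ) (P Q : Finset ℕ) : WithBot ℝ :=
  if FLE P Q then
    (if ∃ S : Finset ℕ, S ⊆ Finset.Icc 1 n ∧ FLE P S ∧ FLE S Q ∧ x ∈ S then 1 else 0)
  else ⊥

open Classical in
/-- The image of a word under `ρₙ`, extended multiplicatively (the empty word maps to the
matrix with `0` in positions `(P,Q)` with `P ≤ Q` and `-∞` elsewhere). -/
noncomputable def rhoW (n : ℕ) : List ℕ → Finset ℕ → Finset ℕ → WithBot ℝ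
  | [] => fun P Q => if FLE P Q then 0 else ⊥
  | x :: w => tmul n (rhoGen n x) (rhoW n w)

/-- The Knuth relations over `{1,…,n}`. -/
inductive KnuthRel (n : ℕ) : List ℕ → List ℕ → Prop
  | k1 (a b c : ℕ) (h1 : 1 ≤ a) (h2 : a < b) (h3 : b ≤ c) (h4 : c ≤ n) :
      KnuthRel n [b, c, a] [b, a, c]
  | k2 (a b c : ℕ) (h1 : 1 ≤ a) (h2 : a ≤ b) (h3 : b < c) (h4 : c ≤ n) :
      KnuthRel n [c, a, b] [a, c, b]

/-- The plactic congruence on words: the equivalence generated by applying Knuth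
relations inside words. Two words are related iff they represent the same element of
the plactic monoid of rank `n`. -/
def PlacticRel (n : ℕ) : List ℕ → List ℕ → Prop :=
  Relation.EqvGen fun w v => ∃ p s x y, KnuthRel n x y ∧ w = p ++ x ++ s ∧ v = p ++ y ++ s

/-- A semistandard Young tableau over `{1,…,n}`, given by its list of rows
(row 0 is the bottom row): entries lie in `{1,…,n}`, rows weakly increase left to right,
row lengths weakly decrease going up, columns strictly increase going up
(i.e. strictly decrease reading down). -/
structure Tableau (n : ℕ) where
  rows : List (List ℕ)
  entries_mem : ∀ r ∈ rows, ∀ x ∈ r, x ∈ Finset.Icc 1 n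
  row_weak : ∀ r ∈ rows, List.Pairwise (· ≤ ·) r
  shape : ∀ i, (rows.getD (i + 1) []).length ≤ (rows.getD i []).length
  col_strict : ∀ i j, j < (rows.getD (i + 1) []).length →
    (rows.getD i []).getD j 0 < (rows.getD (i + 1) []).getD j 0

/-- The number of occurrences of the symbol `y` in row `x` (rows numbered from 1, from
the bottom) of the tableau `T`. -/
def rowCount {n : ℕ} (T : Tableau n) (x y : ℕ) : ℕ := (T.rows.getD (x - 1) []).count y

/-- The row reading of a tableau: rows read left to right, from top row to bottom row. -/
def rowReading {n : ℕ} (T : Tableau n) : List ℕ := T.rows.reverse.flatten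

/-- The `j`-th column of a tableau, read from top to bottom. -/
def colOf {n : ℕ} (T : Tableau n) (j : ℕ) : List ℕ :=
  ((List.range T.rows.length).reverse).filterMap fun i => (T.rows.getD i [])[j]?

/-- The column reading of a tableau: columns read top to bottom, left to right. -/
def colReading {n : ℕ} (T : Tableau n) : List ℕ :=
  ((List.range ((T.rows.getD 0 []).length)).map (colOf T)).flatten

/-- The `(k,m)`-completion of `S ⊆ {1,…,m}`: adjoin to `S` the `k - |S|` largest
elements of `{1,…,m} \ S`. -/
def completion (k m : ℕ) (S : Finset ℕ) : Finset ℕ :=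
  S ∪ ((((Finset.Icc 1 m) \ S).sort (· ≤ ·)).reverse.take (k - S.card)).toFinset

/-- Tropical (max-plus) product of `n × n` matrices over `ℝ ∪ {-∞}`. -/
noncomputable def tmulF (n : ℕ) (A B : Fin n → Fin n → WithBot ℝ) :
    Fin n → Fin n → WithBot ℝ :=
  fun i j => Finset.univ.sup fun k => A i k + B k j

/-- The tropical identity matrix. -/
noncomputable def tIdF (n : ℕ) : Fin n → Fin n → WithBot ℝ :=
  fun i j => if i = j then (0 : WithBot ℝ) else ⊥

/-!
A `k`-subset of `ℕ` is encoded by its increasing enumeration `Fin k → ℕ`, under which `FLE`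
becomes the pointwise order. Let `s ≤ t` enumerate `S₁ ≤ S₂`, with `b = s p` and `a = t q`;
then `q < p`. Let `w i = b + i - p` be the run of consecutive integers through `b` at position
`p`; since `s` grows by at least one at each step, `s ≤ w` up to position `p`. The enumeration
`s ⊔ (t ⊓ w)` is again strictly increasing and lies between `s` and `t`; it takes the value `b`
at `p` and the value `a` at `max q (p - (b - a))`.
-/

open Finset

theorem StrictMono.add_sub_le {k : ℕ} {s : Fin k → ℕ} (hs : StrictMono s) {i j : Fin k}
    (hij : i ≤ j) : s i + (j - i : ℕ) ≤ s j := by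
  have hcard := Finset.card_le_card_of_injOn s (s := Icc i j) (t := Icc (s i) (s j))
    (fun x hx => by
      simp only [coe_Icc, Set.mem_Icc] at hx ⊢
      exact ⟨hs.monotone hx.1, hs.monotone hx.2⟩)
    hs.injective.injOn
  simp only [Fin.card_Icc, Nat.card_Icc] at hcard
  omega

theorem exists_strictMono_between_mem {k : ℕ} {s t : Fin k → ℕ} (hs : StrictMono s)
    (ht : StrictMono t) (hst : s ≤ t) {a b : ℕ} (hab : a < b) (hb : b ∈ Set.range s)
    (ha : a ∈ Set.range t) :
    ∃ u : Fin k → ℕ, StrictMono u ∧ s ≤ u ∧ u ≤ t ∧ a ∈ Set.range u ∧ b ∈ Set.range u := by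
  obtain ⟨p, rfl⟩ := hb
  obtain ⟨q, rfl⟩ := ha
  have hqp : q < p := ht.lt_iff_lt.1 (hab.trans_le (hst p))
  have hpb : (p : ℕ) ≤ s p := by
    have := hs.add_sub_le (i := ⟨0, by omega⟩) (j := p) (Nat.zero_le _)
    simp only [Nat.sub_zero] at this
    omega
  have hsw : ∀ i ≤ p, s i ≤ s p + i - p := fun i hi => by
    have := hs.add_sub_le hi
    omega
  obtain ⟨w, hw_apply⟩ : ∃ w : Fin k → ℕ, ∀ i, w i = s p + i - p := ⟨_, fun _ => rfl⟩
  have hw : StrictMono w := fun i j hij => by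
    have : (i : ℕ) < j := hij
    rw [hw_apply, hw_apply]
    omega
  refine ⟨s ⊔ (t ⊓ w), fun i j hij => max_lt_max (hs hij) (min_lt_min (ht hij) (hw hij)),
    le_sup_left, sup_le hst inf_le_left, ?_, p, ?_⟩
  · have hu : ∀ i ≤ p, min (t i) (w i) = t q → (s ⊔ (t ⊓ w)) i = t q := fun i hip hmin => by
      rw [Pi.sup_apply, Pi.inf_apply, hmin]
      exact max_eq_right (le_min (hst i) ((hsw i hip).trans_eq (hw_apply i).symm) |>.trans_eq hmin)
    obtain ⟨i₀, hi₀⟩ : ∃ i₀ : Fin k, (i₀ : ℕ) = p + t q - s p := ⟨⟨_, by omega⟩, rfl⟩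
    rcases le_or_gt i₀ q with h | h
    · refine ⟨q, hu q hqp.le (min_eq_left ?_)⟩
      have : (i₀ : ℕ) ≤ q := h
      rw [hw_apply]
      omega
    · have hwi₀ : w i₀ = t q := by
        have : (q : ℕ) < i₀ := h
        rw [hw_apply]
        omega
      refine ⟨i₀, hu i₀ (Fin.le_def.2 (by omega)) ?_⟩
      rw [← hwi₀]
      exact min_eq_right (hwi₀.trans_le (ht.monotone h.le))
  · simp only [Pi.sup_apply, Pi.inf_apply, hw_apply, Nat.add_sub_cancel]
    exact max_eq_left inf_le_right

theorem nthEl_eq_orderEmbOfFin {S : Finset ℕ} {k : ℕ} (h : S.card = k) (i : Fin k) :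
    nthEl S i = S.orderEmbOfFin h i := by
  rw [orderEmbOfFin_apply, nthEl, List.getD_eq_getElem _ _ (by simp [h])]
  rfl

theorem fle_iff_orderEmbOfFin_le {S T : Finset ℕ} {k : ℕ} (hS : S.card = k) (hT : T.card = k) :
    FLE S T ↔ ⇑(S.orderEmbOfFin hS) ≤ ⇑(T.orderEmbOfFin hT) := by
  refine ⟨fun h i => ?_, fun h => ⟨hS.trans hT.symm, fun i hi => ?_⟩⟩
  · rw [← nthEl_eq_orderEmbOfFin, ← nthEl_eq_orderEmbOfFin]
    exact h.2 i (hT ▸ i.2)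
  · have := h ⟨i, hT ▸ hi⟩
    rwa [← nthEl_eq_orderEmbOfFin hS, ← nthEl_eq_orderEmbOfFin hT] at this

theorem FLE.refl (S : Finset ℕ) : FLE S S := ⟨rfl, fun _ _ => le_rfl⟩

theorem FLE.trans {A B C : Finset ℕ} (hAB : FLE A B) (hBC : FLE B C) : FLE A C :=
  ⟨hAB.1.trans hBC.1, fun i hi => (hAB.2 i (hBC.1 ▸ hi)).trans (hBC.2 i hi)⟩

theorem subset_Icc_of_fle_of_fle {A S B : Finset ℕ} {l r : ℕ} (hAS : FLE A S) (hSB : FLE S B)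
    (hA : A ⊆ Icc l r) (hB : B ⊆ Icc l r) : S ⊆ Icc l r := by
  intro x hx
  rw [← mem_coe, ← range_orderEmbOfFin S rfl] at hx
  obtain ⟨i, rfl⟩ := hx
  have hAi := mem_Icc.1 (hA (A.orderEmbOfFin_mem hAS.1 i))
  have hBi := mem_Icc.1 (hB (B.orderEmbOfFin_mem hSB.1.symm i))
  have hAS' := (fle_iff_orderEmbOfFin_le hAS.1 rfl).1 hAS i
  have hSB' := (fle_iff_orderEmbOfFin_le rfl hSB.1.symm).1 hSB i
  exact mem_Icc.2 ⟨hAi.1.trans hAS', hSB'.trans hBi.2⟩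

theorem FLE.exists_between_mem {S T : Finset ℕ} (h : FLE S T) {a b : ℕ} (hab : a < b)
    (hb : b ∈ S) (ha : a ∈ T) : ∃ U : Finset ℕ, FLE S U ∧ FLE U T ∧ a ∈ U ∧ b ∈ U := by
  have hst := (fle_iff_orderEmbOfFin_le h.1 rfl).1 h
  obtain ⟨u, hu, hsu, hut, hau, hbu⟩ := exists_strictMono_between_mem
    (S.orderEmbOfFin h.1).strictMono (T.orderEmbOfFin rfl).strictMono hst hab
    (by rwa [range_orderEmbOfFin]) (by rwa [range_orderEmbOfFin])
  have hU : (univ.image u).card = T.card := by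
    rw [card_image_of_injective _ hu.injective, card_univ, Fintype.card_fin]
  have hUu : ⇑((univ.image u).orderEmbOfFin hU) = u :=
    (orderEmbOfFin_unique hU (fun i => mem_image_of_mem u (mem_univ i)) hu).symm
  refine ⟨univ.image u, (fle_iff_orderEmbOfFin_le h.1 hU).2 (hUu.symm ▸ hsu),
    (fle_iff_orderEmbOfFin_le hU rfl).2 (hUu.symm ▸ hut), ?_, ?_⟩
  · simpa using hau
  · simpa using hbu

theorem readable_pair_iff {n x y : ℕ} {P Q : Finset ℕ} :
    Readable n [x, y] P Q ↔ ∃ S₁ S₂ : Finset ℕ, S₁ ⊆ Icc 1 n ∧ S₂ ⊆ Icc 1 n ∧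
      FLE P S₁ ∧ FLE S₁ S₂ ∧ FLE S₂ Q ∧ x ∈ S₁ ∧ y ∈ S₂ := by
  constructor
  · rintro ⟨L, hL, hLsub, hchain, hmem⟩
    obtain ⟨S₁, S₂, rfl⟩ := List.length_eq_two.1 hL
    change List.IsChain FLE [P, S₁, S₂, Q] at hchain
    simp only [List.isChain_cons_cons, List.isChain_singleton, and_true] at hchain
    exact ⟨S₁, S₂, hLsub S₁ (by simp), hLsub S₂ (by simp), hchain.1, hchain.2.1, hchain.2.2,
      by simpa using hmem 0 (by simp), by simpa using hmem 1 (by simp)⟩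
  · rintro ⟨S₁, S₂, h₁, h₂, hPS₁, hS₁S₂, hS₂Q, hx, hy⟩
    refine ⟨[S₁, S₂], rfl, by simp [h₁, h₂], ?_, ?_⟩
    · change List.IsChain FLE [P, S₁, S₂, Q]
      simp only [List.isChain_cons_cons, List.isChain_singleton, and_true]
      exact ⟨hPS₁, hS₁S₂, hS₂Q⟩
    · rintro (_ | _ | i) hi
      · simpa
      · simpa
      · simp at hi

theorem stmt2_general (n a b : ℕ) (hab : a < b) (P Q : Finset ℕ)
    (h : Readable n [b, a] P Q) :
    ∃ S : Finset ℕ, S ⊆ Finset.Icc 1 n ∧ FLE P S ∧ FLE S Q ∧ a ∈ S ∧ b ∈ S ∧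
      Readable n [a, b] P Q := by
  obtain ⟨S₁, S₂, h₁, h₂, hPS₁, hS₁S₂, hS₂Q, hb, ha⟩ := readable_pair_iff.1 h
  obtain ⟨S, hS₁S, hSS₂, haS, hbS⟩ := hS₁S₂.exists_between_mem hab hb ha
  have hS : S ⊆ Icc 1 n := subset_Icc_of_fle_of_fle hS₁S hSS₂ h₁ h₂
  have hPS : FLE P S := hPS₁.trans hS₁S
  have hSQ : FLE S Q := hSS₂.trans hS₂Q
  exact ⟨S, hS, hPS, hSQ, haS, hbS,
    readable_pair_iff.2 ⟨S, S, hS, hS, hPS, FLE.refl S, hSQ, haS, hbS⟩⟩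

/-- if `a < b` and the word `ba` can be read from `P` to `Q` (where
`|P| = |Q|`), then there is a set `S` with `P ≤ S ≤ Q` and `a, b ∈ S`; in particular
`ab` can also be read from `P` to `Q`. -/
theorem stmt2 (n a b : ℕ) (ha : 1 ≤ a) (hb : b ≤ n) (hab : a < b) (P Q : Finset ℕ)
    (hP : P ⊆ Finset.Icc 1 n) (hQ : Q ⊆ Finset.Icc 1 n) (hcard : P.card = Q.card)
    (h : Readable n [b, a] P Q) :
    ∃ S : Finset ℕ, S ⊆ Finset.Icc 1 n ∧ FLE P S ∧ FLE S Q ∧ a ∈ S ∧ b ∈ S ∧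
      Readable n [a, b] P Q :=
  stmt2_general n a b hab P Q h
end

section
/- If a word w over the alphabet {1,...,n} contains a strictly decreasing scattered subword of length k+1 or more, then w cannot be read from the set {1,...,k} to the set {n-k+1,...,n}. -/
/-! Write `c(S, v)` for the number of elements of `S` below `v`. If `S ≤ T` then
`c(T, v) ≤ c(S, v)`, because the `i`-th element of `T` lies below `v` only if the `i`-th element
of `S` does. Along a reading chain, a strictly decreasing subword `v₀ > v₁ > ⋯` with `vⱼ ∈ Sⱼ`
therefore satisfies `c(Sⱼ₊₁, vⱼ₊₁) < c(Sⱼ₊₁, vⱼ) ≤ c(Sⱼ, vⱼ)`, while `c(S₀, v₀) < |S₀| = k`;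
so it has at most `k` letters. -/

open Finset

lemma nthEl_mem {S : Finset ℕ} {i : ℕ} (hi : i < #S) : nthEl S i ∈ S := by
  have h : i < (S.sort (· ≤ ·)).length := by rwa [Finset.length_sort]
  rw [nthEl, List.getD_eq_getElem _ _ h]
  exact (Finset.mem_sort _).mp (List.getElem_mem h)

lemma nthEl_strictMonoOn (S : Finset ℕ) : StrictMonoOn (nthEl S) (Set.Iio #S) := by
  intro i hi j hj hij
  have hl : (S.sort (· ≤ ·)).length = #S := Finset.length_sort _
  have hi' : i < (S.sort (· ≤ ·)).length := hl ▸ hi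
  have hj' : j < (S.sort (· ≤ ·)).length := hl ▸ hj
  rw [nthEl, nthEl, List.getD_eq_getElem _ _ hi', List.getD_eq_getElem _ _ hj']
  exact List.pairwise_iff_getElem.mp (Finset.sortedLT_sort S).pairwise i j hi' hj' hij

lemma exists_nthEl_eq {S : Finset ℕ} {x : ℕ} (hx : x ∈ S) : ∃ i < #S, nthEl S i = x := by
  obtain ⟨i, hi, hix⟩ := List.mem_iff_getElem.mp ((Finset.mem_sort (· ≤ ·)).mpr hx)
  refine ⟨i, by rwa [Finset.length_sort] at hi, ?_⟩
  rw [nthEl, List.getD_eq_getElem _ _ hi, hix]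

lemma nthEl_lt_iff {S : Finset ℕ} {i : ℕ} (hi : i < #S) (v : ℕ) :
    nthEl S i < v ↔ i < #{x ∈ S | x < v} := by
  have hmono := nthEl_strictMonoOn S
  constructor
  · intro hv
    have hmaps : Set.MapsTo (nthEl S) (range (i + 1)) (({x ∈ S | x < v} : Finset ℕ) : Set ℕ) := by
      intro j hj
      have hji : j ≤ i := Nat.lt_succ_iff.mp (mem_range.mp hj)
      exact mem_coe.mpr <| mem_filter.mpr ⟨nthEl_mem (hji.trans_lt hi),
        ((hmono.le_iff_le (hji.trans_lt hi) hi).mpr hji).trans_lt hv⟩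
    have hinj : Set.InjOn (nthEl S) (range (i + 1)) :=
      hmono.injOn.mono fun j hj => (mem_range.mp hj).trans_le hi
    simpa using card_le_card_of_injOn _ hmaps hinj
  · intro hlt
    by_contra! hv
    suffices h : {x ∈ S | x < v} ⊆ (range i).image (nthEl S) by
      have := (card_le_card h).trans card_image_le
      rw [card_range] at this
      omega
    intro x hx
    obtain ⟨hxS, hxv⟩ := mem_filter.mp hx
    obtain ⟨j, hj, rfl⟩ := exists_nthEl_eq hxS
    refine mem_image.mpr ⟨j, mem_range.mpr ?_, rfl⟩
    exact (hmono.lt_iff_lt hj hi).mp (hxv.trans_le hv)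

lemma FLE.card_filter_lt_le {S T : Finset ℕ} (h : FLE S T) (v : ℕ) :
    #{x ∈ T | x < v} ≤ #{x ∈ S | x < v} := by
  by_contra! hlt
  have hT : #{x ∈ S | x < v} < #T := hlt.trans_le (card_filter_le _ _)
  have hS : #{x ∈ S | x < v} < #S := h.1 ▸ hT
  have := (h.2 _ hT).trans_lt ((nthEl_lt_iff hT v).mpr hlt)
  exact (nthEl_lt_iff hS v).mp this |>.false

instance : IsTrans (Finset ℕ) FLE :=
  ⟨fun _ _ _ h₁ h₂ => ⟨h₁.1.trans h₂.1, fun i hi => (h₁.2 i (h₂.1 ▸ hi)).trans (h₂.2 i hi)⟩⟩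

lemma length_le_card_filter_lt_of_isChain {v : ℕ} {S : Finset ℕ} {Z : List (ℕ × Finset ℕ)}
    (hmem : ∀ p ∈ Z, p.1 ∈ p.2)
    (hZ : List.IsChain (fun p q => FLE p.2 q.2 ∧ q.1 < p.1) ((v, S) :: Z)) :
    Z.length ≤ #{x ∈ S | x < v} := by
  induction Z generalizing v S with
  | nil => simp
  | cons q Z ih =>
    obtain ⟨u, T⟩ := q
    obtain ⟨⟨hST, huv⟩, hZ⟩ := List.isChain_cons_cons.mp hZ
    dsimp only at hST huv
    have hu : u ∈ T := hmem (u, T) List.mem_cons_self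
    have hstep : #{x ∈ T | x < u} < #{x ∈ T | x < v} := by
      refine card_lt_card <| (ssubset_iff_of_subset ?_).mpr ⟨u, ?_, ?_⟩
      · intro x hx
        simp only [mem_filter] at hx ⊢
        exact ⟨hx.1, hx.2.trans huv⟩
      · exact mem_filter.mpr ⟨hu, huv⟩
      · simp
    have hZlen := ih (fun p hp => hmem p (List.mem_cons_of_mem _ hp)) hZ
    have hanti := hST.card_filter_lt_le v
    simp only [List.length_cons]
    omega

lemma Readable.length_le_card_of_sublist {n : ℕ} {w : List ℕ} {P Q : Finset ℕ}
    (hr : Readable n w P Q) {u : List ℕ} (hu : u.Sublist w) (hdec : List.IsChain (· > ·) u) :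
    u.length ≤ #P := by
  obtain ⟨L, hlen, -, hchain, hmem⟩ := hr
  obtain ⟨hPL, hL⟩ := List.pairwise_cons.mp (List.IsChain.pairwise hchain)
  have hZmem : ∀ p ∈ w.zip L, p.1 ∈ p.2 := by
    intro p hp
    obtain ⟨i, hi, rfl⟩ := List.mem_iff_getElem.mp hp
    have hiw : i < w.length := by rw [List.length_zip] at hi; omega
    have := hmem i hiw
    rw [List.getD_eq_getElem _ _ (hlen ▸ hiw)] at this
    simpa using this
  have hZL : (w.zip L).Pairwise fun p q => FLE p.2 q.2 := by
    rw [← List.pairwise_map (f := Prod.snd), List.map_snd_zip hlen.le]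
    exact (List.pairwise_append.mp hL).1
  obtain ⟨Z, hZ, rfl⟩ := List.sublist_map_iff.mp (List.map_fst_zip hlen.ge ▸ hu)
  have hZchain : Z.IsChain fun p q => FLE p.2 q.2 ∧ q.1 < p.1 :=
    ((hZL.sublist hZ).and (List.pairwise_map.mp (List.IsChain.pairwise hdec))).isChain
  match Z, hZ, hZchain with
  | [], _, _ => simp
  | p :: Z, hZ, hZchain =>
    have hp : p ∈ w.zip L := hZ.subset List.mem_cons_self
    have hcard : #P = #p.2 := (hPL p.2 (List.mem_append_left _ (List.of_mem_zip hp).2)).1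
    have hlt : #{x ∈ p.2 | x < p.1} < #p.2 :=
      card_lt_card <| filter_ssubset.mpr ⟨p.1, hZmem p hp, lt_irrefl _⟩
    have hZlen := length_le_card_filter_lt_of_isChain
      (fun q hq => hZmem q (hZ.subset (List.mem_cons_of_mem _ hq))) hZchain
    simp only [List.length_map, List.length_cons]
    omega

theorem stmt3_general (n k : ℕ) (w : List ℕ)
    (h : ∃ u : List ℕ, u.Sublist w ∧ k + 1 ≤ u.length ∧ List.Chain' (· > ·) u) :
    ¬ Readable n w (Finset.Icc 1 k) (Finset.Icc (n - k + 1) n) := by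
  obtain ⟨u, hu, hlen, hdec⟩ := h
  intro hr
  have hbound := hr.length_le_card_of_sublist hu hdec
  rw [Nat.card_Icc] at hbound
  omega

/-- if a word `w` over `{1,…,n}` contains a strictly decreasing scattered
subword of length at least `k+1`, then `w` cannot be read from `{1,…,k}` to
`{n-k+1,…,n}`. -/
theorem stmt3 (n k : ℕ) (hk : k ≤ n) (w : List ℕ) (hw : ∀ x ∈ w, x ∈ Finset.Icc 1 n)
    (h : ∃ u : List ℕ, u.Sublist w ∧ k + 1 ≤ u.length ∧ List.Chain' (· > ·) u) :
    ¬ Readable n w (Finset.Icc 1 k) (Finset.Icc (n - k + 1) n) :=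
  stmt3_general n k w h
end

section
/- Let T be a semistandard tableau over {1,...,n} with parameters i_{x,y} (the number of occurrences of symbol y in row x), and suppose i_{x+1,y+1} ≥ i_{x,y} for all 1 ≤ x < y < n. Let ρ(T)_{p,q} denote the maximum length of a weakly non-decreasing scattered subword of the row reading of T using only letters in {p,...,q}. Then ρ(T)_{p,q} = ∑_{j=p}^{q−1} i_{p,j} + ∑_{j=1}^{p} i_{j,q} for all 1 ≤ p ≤ q ≤ n. -/
/-!
Split a non-decreasing subword `u` of the row reading with letters in `[p, q]` into the part
`u₁` read from the rows `≥ p` and the part `u₂` read from the rows `< p`, and let `t` be the last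
letter of `u₁`. By column strictness, a non-decreasing subword of the rows `≥ p` with letters
`≤ t` is no longer than the number of letters `≤ t` in row `p`. The rows below `p` are handled by
induction: the hypothesis `i_{x,y} ≤ i_{x+1,y+1}` trades the letters of row `x` in `[c, q)` for
the letters of row `x + 1` in `(c, q]`, so `|u₂|` is at most the number of letters of row `p` in
`(t, q]` plus the number of `q`s below row `p`. The bound is attained by the letters of row `p`
in `[p, q]` followed by all the `q`s of the rows below.
-/

namespace List

variable {α : Type*}

theorem Sublist.length_le_countP {l z : List α} {p : α → Bool} (hz : z <+ l)
    (hp : ∀ a ∈ z, p a) : z.length ≤ l.countP p :=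
  countP_eq_length.mpr hp ▸ hz.countP_le

theorem sum_count_eq_countP [DecidableEq α] (l : List α) (s : Finset α) :
    ∑ j ∈ s, l.count j = l.countP (· ∈ s) := by
  induction l with
  | nil => simp
  | cons x l ih =>
    simp only [count_cons, countP_cons, Finset.sum_add_distrib, ih, beq_iff_eq,
      Finset.sum_ite_eq, decide_eq_true_eq]

theorem Sublist.length_le_sum_count [DecidableEq α] {l z : List α} {s : Finset α}
    (hz : z <+ l) (hs : ∀ a ∈ z, a ∈ s) : z.length ≤ ∑ j ∈ s, l.count j :=
  sum_count_eq_countP l s ▸ hz.length_le_countP (by simpa using hs)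

theorem countP_add_countP_le {l : List α} {p q r : α → Bool}
    (hpq : ∀ a ∈ l, p a → q a → False) (hp : ∀ a ∈ l, p a → r a) (hq : ∀ a ∈ l, q a → r a) :
    l.countP p + l.countP q ≤ l.countP r := by
  induction l with
  | nil => simp
  | cons x l ih =>
    simp only [mem_cons, forall_eq_or_imp] at hpq hp hq
    have := ih hpq.2 hp.2 hq.2
    simp only [countP_cons]
    cases hpx : p x <;> cases hqx : q x <;> cases hrx : r x <;> simp_all <;> omega

theorem exists_split_of_sublist_append [LinearOrder α] {l₁ l₂ z : List α} {c q : α}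
    (hz : z <+ l₁ ++ l₂) (hs : z.Pairwise (· ≤ ·)) (hc : c ≤ q) (hmem : ∀ a ∈ z, a ∈ Set.Icc c q) :
    ∃ t ∈ Set.Icc c q, ∃ z₁ z₂, z = z₁ ++ z₂ ∧ z₁ <+ l₁ ∧ z₂ <+ l₂ ∧
      z₁.Pairwise (· ≤ ·) ∧ z₂.Pairwise (· ≤ ·) ∧
      (∀ a ∈ z₁, a ∈ Set.Icc c t) ∧ ∀ a ∈ z₂, a ∈ Set.Icc t q := by
  obtain ⟨z₁, z₂, rfl, hz₁, hz₂⟩ := sublist_append_iff.mp hz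
  obtain ⟨hs₁, hs₂, hs₁₂⟩ := pairwise_append.mp hs
  rcases eq_or_ne z₁ [] with rfl | hne
  · exact ⟨c, ⟨le_rfl, hc⟩, [], z₂, rfl, hz₁, hz₂, .nil, hs₂, by simp,
      fun a ha => hmem a (by simp [ha])⟩
  · have hlast := getLast_mem hne
    refine ⟨z₁.getLast hne, hmem _ (mem_append_left _ hlast), z₁, z₂, rfl, hz₁, hz₂, hs₁, hs₂,
      fun a ha => ⟨(hmem a (mem_append_left _ ha)).1, hs₁.rel_getLast ha⟩,
      fun a ha => ⟨hs₁₂ _ hlast a ha, (hmem a (mem_append_right _ ha)).2⟩⟩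

theorem countP_le_le_countP_lt {r r' : List ℕ} (t : ℕ) (hlen : r'.length ≤ r.length)
    (hcol : ∀ j < r'.length, r.getD j 0 < r'.getD j 0) :
    r'.countP (· ≤ t) ≤ r.countP (· < t) := by
  induction r' generalizing r with
  | nil => simp
  | cons a' r' ih =>
    cases r with
    | nil => simp at hlen
    | cons a r =>
      have h0 : a < a' := by simpa using hcol 0 (by simp)
      have := ih (r := r) (by simpa using hlen) fun j hj => by
        simpa using hcol (j + 1) (by simpa using hj)
      simp only [countP_cons, decide_eq_true_eq]
      split_ifs <;> omega

theorem flatten_reverse_take_succ (R : List (List α)) (k : ℕ) :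
    (R.take (k + 1)).reverse.flatten = R.getD k [] ++ (R.take k).reverse.flatten := by
  rw [take_add_one, reverse_append, flatten_append, getD_eq_getElem?_getD]
  cases R[k]? <;> simp

theorem flatten_reverse_drop (R : List (List α)) (k : ℕ) :
    (R.drop k).reverse.flatten = (R.drop (k + 1)).reverse.flatten ++ R.getD k [] := by
  rw [← drop_drop, getD_eq_getElem?_getD, ← head?_drop]
  cases R.drop k <;> simp

theorem flatten_reverse_eq_drop_append_take (R : List (List α)) (k : ℕ) :
    R.reverse.flatten = (R.drop k).reverse.flatten ++ (R.take k).reverse.flatten := by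
  conv_lhs => rw [← take_append_drop k R]
  rw [reverse_append, flatten_append]

end List

theorem Finset.sum_Ico_consecutive_succ_top {M : Type*} [AddCommMonoid M] (f : ℕ → M)
    {a t q : ℕ} (hat : a ≤ t) (htq : t ≤ q) :
    ∑ j ∈ Finset.Ico a (t + 1), f j + ∑ j ∈ Finset.Ico (t + 1) (q + 1), f j =
      ∑ j ∈ Finset.Ico a q, f j + f q := by
  rw [Finset.sum_Ico_consecutive f (by omega) (by omega), Finset.sum_Ico_succ_top (by omega)]

namespace Tableau

variable {n : ℕ} (T : Tableau n)

-- `T.rows.getD k []` is row `k + 1` in the numbering of `rowCount`; `T.rows.take k` and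
-- `T.rows.drop k` are the rows below it and the rows from it upwards.

theorem pairwise_row (i : ℕ) : (T.rows.getD i []).Pairwise (· ≤ ·) := by
  rw [List.getD_eq_getElem?_getD]
  cases h : T.rows[i]? with
  | none => simp
  | some r => exact T.row_weak r (List.mem_of_getElem? h)

theorem lt_of_mem_row : ∀ i, ∀ a ∈ T.rows.getD i [], i < a
  | 0, a, ha => by
    rw [List.getD_eq_getElem?_getD] at ha
    cases h : T.rows[0]? with
    | none => simp [h] at ha
    | some r =>
      simp only [h, Option.getD_some] at ha
      exact (Finset.mem_Icc.mp (T.entries_mem r (List.mem_of_getElem? h) a ha)).1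
  | i + 1, a, ha => by
    obtain ⟨j, hj, rfl⟩ := List.getElem_of_mem ha
    have hj' : j < (T.rows.getD i []).length := hj.trans_le (T.shape i)
    have := T.col_strict i j hj
    rw [List.getD_eq_getElem _ _ hj, List.getD_eq_getElem _ _ hj'] at this
    have := lt_of_mem_row i _ (List.getElem_mem hj')
    omega

theorem length_le_countP_of_sublist_drop (k : ℕ) {u : List ℕ} {b : ℕ}
    (hu : u.Sublist (T.rows.drop k).reverse.flatten) (hs : u.Pairwise (· ≤ ·))
    (hb : ∀ a ∈ u, a ≤ b) :
    u.length ≤ (T.rows.getD k []).countP (· ≤ b) := by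
  by_cases hk : T.rows.length ≤ k
  · simp [List.drop_eq_nil_of_le hk] at hu
    simp [hu]
  rw [List.flatten_reverse_drop] at hu
  obtain ⟨t, ⟨-, htb⟩, u₁, u₂, rfl, hu₁, hu₂, hs₁, -, hm₁, hm₂⟩ :=
    List.exists_split_of_sublist_append hu hs (Nat.zero_le b) fun a ha => ⟨Nat.zero_le a, hb a ha⟩
  have h₁ : u₁.length ≤ (T.rows.getD k []).countP (· < t) :=
    (length_le_countP_of_sublist_drop (k + 1) hu₁ hs₁ fun a ha => (hm₁ a ha).2).trans
      (List.countP_le_le_countP_lt t (T.shape k) (T.col_strict k))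
  have h₂ : u₂.length ≤ (T.rows.getD k []).countP (fun a => t ≤ a ∧ a ≤ b) :=
    hu₂.length_le_countP (by simpa using hm₂)
  rw [List.length_append]
  refine (add_le_add h₁ h₂).trans (List.countP_add_countP_le ?_ ?_ ?_) <;> intro a _ <;>
    simp only [decide_eq_true_eq] <;> omega
termination_by T.rows.length - k

theorem sum_rowCount_Ico_le_succ
    (hyp : ∀ x y, 1 ≤ x → x < y → y < n → rowCount T x y ≤ rowCount T (x + 1) (y + 1))
    {x c q : ℕ} (hx : 1 ≤ x) (hxc : x < c) (hq : q ≤ n) :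
    ∑ j ∈ Finset.Ico c q, rowCount T x j ≤
      ∑ j ∈ Finset.Ico (c + 1) (q + 1), rowCount T (x + 1) j := by
  rw [← Finset.sum_Ico_add']
  exact Finset.sum_le_sum fun j hj => by
    rw [Finset.mem_Ico] at hj
    exact hyp x j hx (by omega) (by omega)

theorem length_le_of_sublist_take
    (hyp : ∀ x y, 1 ≤ x → x < y → y < n → rowCount T x y ≤ rowCount T (x + 1) (y + 1))
    {q : ℕ} (hq : q ≤ n) :
    ∀ (k : ℕ) {z : List ℕ} {c : ℕ}, k < c → c ≤ q → z.Sublist (T.rows.take k).reverse.flatten →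
      z.Pairwise (· ≤ ·) → (∀ a ∈ z, a ∈ Set.Icc c q) →
      z.length ≤ ∑ j ∈ Finset.Ico (c + 1) (q + 1), rowCount T (k + 1) j +
        (T.rows.take k).reverse.flatten.count q
  | 0, z, c, _, _, hz, _, _ => by simp_all
  | k + 1, z, c, hkc, hcq, hz, hs, hm => by
    rw [List.flatten_reverse_take_succ] at hz ⊢
    obtain ⟨t, ⟨hct, htq⟩, z₁, z₂, rfl, hz₁, hz₂, -, hs₂, hm₁, hm₂⟩ :=
      List.exists_split_of_sublist_append hz hs hcq hm
    have h₁ : z₁.length ≤ ∑ j ∈ Finset.Ico c (t + 1), rowCount T (k + 1) j :=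
      hz₁.length_le_sum_count fun a ha => by
        have := hm₁ a ha
        rw [Set.mem_Icc] at this
        rw [Finset.mem_Ico]
        omega
    have h₂ := length_le_of_sublist_take hyp hq k (c := t) (by omega) htq hz₂ hs₂ hm₂
    have hshift := T.sum_rowCount_Ico_le_succ hyp (x := k + 1) (c := c) (by omega) (by omega) hq
    have hsplit := Finset.sum_Ico_consecutive_succ_top (rowCount T (k + 1)) hct htq
    have hrow : (T.rows.getD k []).count q = rowCount T (k + 1) q := rfl
    rw [List.length_append, List.count_append, hrow]
    omega

theorem sum_rowCount_Icc_eq_count (q : ℕ) :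
    ∀ k, ∑ x ∈ Finset.Icc 1 k, rowCount T x q = (T.rows.take k).reverse.flatten.count q
  | 0 => by simp
  | k + 1 => by
    rw [Finset.sum_Icc_succ_top (by omega), sum_rowCount_Icc_eq_count q k,
      List.flatten_reverse_take_succ, List.count_append, add_comm]
    rfl

theorem sum_rowCount_Ico_eq_countP (k b : ℕ) :
    ∑ j ∈ Finset.Ico (k + 1) (b + 1), rowCount T (k + 1) j =
      (T.rows.getD k []).countP (· ≤ b) := by
  refine (List.sum_count_eq_countP _ _).trans (List.countP_congr fun a ha => ?_)
  have := T.lt_of_mem_row k a ha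
  simp only [Finset.mem_Ico, decide_eq_true_eq]
  omega

theorem exists_sorted_sublist_rowReading {p q : ℕ} (hp : 1 ≤ p) (hpq : p ≤ q) :
    ∃ u : List ℕ, u.Sublist (rowReading T) ∧ List.Pairwise (· ≤ ·) u ∧
      (∀ x ∈ u, x ∈ Finset.Icc p q) ∧
      u.length = (∑ j ∈ Finset.Ico p q, rowCount T p j) + ∑ j ∈ Finset.Icc 1 p, rowCount T j q := by
  obtain ⟨k, rfl⟩ : ∃ k, p = k + 1 := ⟨p - 1, by omega⟩
  refine ⟨(T.rows.getD k []).filter (· ≤ q) ++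
    List.replicate ((T.rows.take k).reverse.flatten.count q) q, ?_, ?_, ?_, ?_⟩
  · rw [rowReading, List.flatten_reverse_eq_drop_append_take T.rows k,
      List.flatten_reverse_drop T.rows k, List.append_assoc]
    exact ((List.filter_sublist).append (List.replicate_sublist_iff.mpr le_rfl)).trans
      (List.sublist_append_right _ _)
  · refine List.pairwise_append.mpr ⟨(T.pairwise_row k).sublist List.filter_sublist,
      List.pairwise_replicate.mpr (Or.inr le_rfl), fun a ha b hb => ?_⟩
    rw [List.eq_of_mem_replicate hb]
    simpa using (List.mem_filter.mp ha).2
  · intro x hx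
    rcases List.mem_append.mp hx with hx | hx
    · obtain ⟨hx, hxq⟩ := List.mem_filter.mp hx
      have := T.lt_of_mem_row k x hx
      simp only [decide_eq_true_eq] at hxq
      simp only [Finset.mem_Icc]
      omega
    · rw [List.eq_of_mem_replicate hx]
      simp only [Finset.mem_Icc]
      omega
  · rw [List.length_append, ← List.countP_eq_length_filter, List.length_replicate,
      ← T.sum_rowCount_Ico_eq_countP, Finset.sum_Ico_succ_top hpq,
      ← T.sum_rowCount_Icc_eq_count, Finset.sum_Icc_succ_top (by omega)]
    ring

theorem length_le_of_sorted_sublist_rowReading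
    (hyp : ∀ x y, 1 ≤ x → x < y → y < n → rowCount T x y ≤ rowCount T (x + 1) (y + 1))
    {p q : ℕ} (hp : 1 ≤ p) (hpq : p ≤ q) (hq : q ≤ n) {u : List ℕ}
    (hu : u.Sublist (rowReading T)) (hs : List.Pairwise (· ≤ ·) u)
    (hm : ∀ x ∈ u, x ∈ Finset.Icc p q) :
    u.length ≤ (∑ j ∈ Finset.Ico p q, rowCount T p j) + ∑ j ∈ Finset.Icc 1 p, rowCount T j q := by
  obtain ⟨k, rfl⟩ : ∃ k, p = k + 1 := ⟨p - 1, by omega⟩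
  rw [rowReading, List.flatten_reverse_eq_drop_append_take _ k] at hu
  obtain ⟨t, ⟨hpt, htq⟩, u₁, u₂, rfl, hu₁, hu₂, hs₁, hs₂, hm₁, hm₂⟩ :=
    List.exists_split_of_sublist_append hu hs hpq (by simpa using hm)
  have h₁ := T.length_le_countP_of_sublist_drop k hu₁ hs₁ fun a ha => (hm₁ a ha).2
  have h₂ := T.length_le_of_sublist_take hyp hq k (by omega) htq hu₂ hs₂ hm₂
  rw [← T.sum_rowCount_Icc_eq_count] at h₂
  rw [← T.sum_rowCount_Ico_eq_countP] at h₁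
  have hsplit := Finset.sum_Ico_consecutive_succ_top (rowCount T (k + 1)) hpt htq
  rw [Finset.sum_Icc_succ_top (by omega), List.length_append]
  omega

end Tableau

/-- let `T` be a semistandard tableau over `{1,…,n}` whose row counts
satisfy `i_{x+1,y+1} ≥ i_{x,y}` for `1 ≤ x < y < n`. Then for `1 ≤ p ≤ q ≤ n`, the
maximum length of a weakly non-decreasing scattered subword of the row reading of `T`
with letters in `{p,…,q}` equals `∑_{j=p}^{q-1} i_{p,j} + ∑_{j=1}^{p} i_{j,q}`. -/
theorem stmt15 (n : ℕ) (T : Tableau n)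
    (hyp : ∀ x y, 1 ≤ x → x < y → y < n → rowCount T x y ≤ rowCount T (x + 1) (y + 1))
    (p q : ℕ) (hp : 1 ≤ p) (hpq : p ≤ q) (hq : q ≤ n) :
    (∃ u : List ℕ, u.Sublist (rowReading T) ∧ List.Pairwise (· ≤ ·) u ∧
        (∀ x ∈ u, x ∈ Finset.Icc p q) ∧
        u.length = (∑ j ∈ Finset.Ico p q, rowCount T p j) +
          ∑ j ∈ Finset.Icc 1 p, rowCount T j q) ∧
    (∀ u : List ℕ, u.Sublist (rowReading T) → List.Pairwise (· ≤ ·) u →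
        (∀ x ∈ u, x ∈ Finset.Icc p q) →
        u.length ≤ (∑ j ∈ Finset.Ico p q, rowCount T p j) +
          ∑ j ∈ Finset.Icc 1 p, rowCount T j q) :=
  ⟨T.exists_sorted_sublist_rowReading hp hpq,
    fun _ hu hs hm => T.length_le_of_sorted_sublist_rowReading hyp hp hpq hq hu hs hm⟩
end
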